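/- Let (X, U, Y) be random variables with Y square-integrable, suppose the conditional mean independence condition E[Y | U] = E[Y | U, X] almost surely holds, let f : 𝒳 → ℝ with f(X) square-integrable, and let w ∈ (0, 1). Then the minimum over all square-integrable h : 𝒰 → ℝ of J_w(f, h) equals MSE(f) + ((1−w)/w)·E[(f(X) − E[f(X) | U])²] + (w/(1−w))·E[(Y − E[Y | U])²], where MSE(f) := E[(f(X) − Y)²]. -/

import Mathlib

/-!
Write `A = E[f(X) | U]` and `B = E[Y | U]`. The residuals `f(X) - A` and `Y - B` are orthogonal
to every square-integrable function of `U`, and conditional mean independence makes `Y - B`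
orthogonal to every square-integrable function of `(U, X)` as well, in particular to `f(X) - B`.
Pythagoras therefore splits each of the three squared losses into a residual part and a part
depending on `U` only, and the pointwise identity
`(h - a)² / w + (h - b)² / (1 - w) = (a - b)² + (h - ((1 - w) a + w b))² / (w (1 - w))`
turns `J_w(f, h)` into the claimed value plus `E[(h(U) - ((1 - w) A + w B))²] / (w (1 - w))`.
The minimum is attained at `h(U) = (1 - w) A + w B`, which is a function of `U` by Doob–Dynkin.
-/

open MeasureTheory

section

variable {Ω : Type*} {m m0 : MeasurableSpace Ω} {μ : Measure Ω}

theorem inv_mul_integral_sq_sub_add_inv_mul_integral_sq_sub {w : ℝ} (hw0 : w ≠ 0) (hw1 : w ≠ 1)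
    {A B H : Ω → ℝ} (hA2 : MemLp A 2 μ) (hB2 : MemLp B 2 μ) (hH2 : MemLp H 2 μ) :
    (1 / w) * ∫ ω, (H ω - A ω) ^ 2 ∂μ + (1 / (1 - w)) * ∫ ω, (H ω - B ω) ^ 2 ∂μ
      = ∫ ω, (B ω - A ω) ^ 2 ∂μ
        + (1 / (w * (1 - w))) * ∫ ω, (H ω - ((1 - w) * A ω + w * B ω)) ^ 2 ∂μ := by
  have hw1' : 1 - w ≠ 0 := sub_ne_zero.mpr hw1.symm
  have hHA : Integrable (fun ω => 1 / w * (H ω - A ω) ^ 2) μ :=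
    (hH2.sub hA2).integrable_sq.const_mul _
  have hHB : Integrable (fun ω => 1 / (1 - w) * (H ω - B ω) ^ 2) μ :=
    (hH2.sub hB2).integrable_sq.const_mul _
  have hBA : Integrable (fun ω => (B ω - A ω) ^ 2) μ := (hB2.sub hA2).integrable_sq
  have hHG : Integrable
      (fun ω => 1 / (w * (1 - w)) * (H ω - ((1 - w) * A ω + w * B ω)) ^ 2) μ :=
    (hH2.sub ((hA2.const_mul (1 - w)).add (hB2.const_mul w))).integrable_sq.const_mul _
  calc (1 / w) * ∫ ω, (H ω - A ω) ^ 2 ∂μ + (1 / (1 - w)) * ∫ ω, (H ω - B ω) ^ 2 ∂μ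
      = ∫ ω, (1 / w * (H ω - A ω) ^ 2 + 1 / (1 - w) * (H ω - B ω) ^ 2) ∂μ := by
        rw [integral_add hHA hHB, integral_const_mul, integral_const_mul]
    _ = ∫ ω, ((B ω - A ω) ^ 2
          + 1 / (w * (1 - w)) * (H ω - ((1 - w) * A ω + w * B ω)) ^ 2) ∂μ := by
        congr with ω
        field_simp
        ring
    _ = _ := by rw [integral_add hBA hHG, integral_const_mul]

variable [IsFiniteMeasure μ]

theorem condExp_sub_condExp_ae_eq_zero (hm : m ≤ m0) {G : Ω → ℝ} (hG : Integrable G μ) :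
    μ[G - μ[G | m] | m] =ᵐ[μ] 0 := by
  refine (condExp_sub hG integrable_condExp m).trans ?_
  rw [condExp_of_stronglyMeasurable hm stronglyMeasurable_condExp integrable_condExp, sub_self]

theorem integral_mul_eq_zero_of_condExp_eq_zero (hm : m ≤ m0) {V Z : Ω → ℝ}
    (hV : StronglyMeasurable[m] V) (hV2 : MemLp V 2 μ) (hZ2 : MemLp Z 2 μ)
    (hZ : μ[Z | m] =ᵐ[μ] 0) : ∫ ω, V ω * Z ω ∂μ = 0 := by
  rw [← integral_condExp hm]
  refine integral_eq_zero_of_ae ?_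
  filter_upwards [condExp_mul_of_stronglyMeasurable_left hV (hV2.integrable_mul hZ2)
    (hZ2.integrable one_le_two), hZ] with ω hVZ hZω
  change μ[V * Z | m] ω = 0
  rw [hVZ, Pi.mul_apply, hZω, Pi.zero_apply, mul_zero]

theorem integral_sub_sq_of_condExp_eq_zero (hm : m ≤ m0) {V Z : Ω → ℝ}
    (hV : StronglyMeasurable[m] V) (hV2 : MemLp V 2 μ) (hZ2 : MemLp Z 2 μ)
    (hZ : μ[Z | m] =ᵐ[μ] 0) :
    ∫ ω, (V ω - Z ω) ^ 2 ∂μ = ∫ ω, V ω ^ 2 ∂μ + ∫ ω, Z ω ^ 2 ∂μ := by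
  have hsq : Integrable (fun ω => V ω ^ 2 + Z ω ^ 2) μ := hV2.integrable_sq.add hZ2.integrable_sq
  have hVZ : Integrable (fun ω => 2 * (V ω * Z ω)) μ := (hV2.integrable_mul hZ2).const_mul 2
  calc ∫ ω, (V ω - Z ω) ^ 2 ∂μ
      = ∫ ω, (V ω ^ 2 + Z ω ^ 2 - 2 * (V ω * Z ω)) ∂μ := by congr with ω; ring
    _ = ∫ ω, V ω ^ 2 ∂μ + ∫ ω, Z ω ^ 2 ∂μ - 2 * ∫ ω, V ω * Z ω ∂μ := by
      rw [integral_sub hsq hVZ,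
        integral_add hV2.integrable_sq hZ2.integrable_sq, integral_const_mul]
    _ = _ := by rw [integral_mul_eq_zero_of_condExp_eq_zero hm hV hV2 hZ2 hZ, mul_zero, sub_zero]

/-- `J_w(f, h)` with `F = f(X)` and `H = h(U)`. -/
noncomputable def jointRisk (μ : Measure Ω) (w : ℝ) (F H Y : Ω → ℝ) : ℝ :=
  (1 / w) * ∫ ω, (F ω - H ω) ^ 2 ∂μ + (1 / (1 - w)) * ∫ ω, (H ω - Y ω) ^ 2 ∂μ

theorem jointRisk_eq_mse_add_shrinkage {m' : MeasurableSpace Ω} (hm : m ≤ m') (hm' : m' ≤ m0)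
    {F Y H : Ω → ℝ} (hF : StronglyMeasurable[m'] F) (hF2 : MemLp F 2 μ) (hY2 : MemLp Y 2 μ)
    (hCMI : μ[Y | m] =ᵐ[μ] μ[Y | m']) (hH : StronglyMeasurable[m] H) (hH2 : MemLp H 2 μ)
    {w : ℝ} (hw0 : w ≠ 0) (hw1 : w ≠ 1) :
    jointRisk μ w F H Y
      = ∫ ω, (F ω - Y ω) ^ 2 ∂μ + ((1 - w) / w) * ∫ ω, (F ω - μ[F | m] ω) ^ 2 ∂μ
        + (w / (1 - w)) * ∫ ω, (Y ω - μ[Y | m] ω) ^ 2 ∂μ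
        + (1 / (w * (1 - w))) * ∫ ω, (H ω - ((1 - w) * μ[F | m] ω + w * μ[Y | m] ω)) ^ 2 ∂μ := by
  have hw1' : 1 - w ≠ 0 := sub_ne_zero.mpr hw1.symm
  set A := μ[F | m]
  set B := μ[Y | m]
  have hA : StronglyMeasurable[m] A := stronglyMeasurable_condExp
  have hB : StronglyMeasurable[m] B := stronglyMeasurable_condExp
  have hA2 : MemLp A 2 μ := hF2.condExp one_le_two
  have hB2 : MemLp B 2 μ := hY2.condExp one_le_two
  have hFA : μ[F - A | m] =ᵐ[μ] 0 :=
    condExp_sub_condExp_ae_eq_zero (hm.trans hm') (hF2.integrable one_le_two)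
  have hYB : μ[Y - B | m] =ᵐ[μ] 0 :=
    condExp_sub_condExp_ae_eq_zero (hm.trans hm') (hY2.integrable one_le_two)
  have hYB' : μ[Y - B | m'] =ᵐ[μ] 0 :=
    (condExp_congr_ae ((ae_eq_refl Y).sub hCMI)).trans
      (condExp_sub_condExp_ae_eq_zero hm' (hY2.integrable one_le_two))
  have hFH : ∫ ω, (F ω - H ω) ^ 2 ∂μ = ∫ ω, (H ω - A ω) ^ 2 ∂μ + ∫ ω, (F ω - A ω) ^ 2 ∂μ := by
    rw [← integral_sub_sq_of_condExp_eq_zero (V := fun ω => H ω - A ω)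
      (Z := fun ω => F ω - A ω) (hm.trans hm') (hH.sub hA) (hH2.sub hA2)
      (hF2.sub hA2) hFA]
    congr with ω
    ring
  have hHY : ∫ ω, (H ω - Y ω) ^ 2 ∂μ = ∫ ω, (H ω - B ω) ^ 2 ∂μ + ∫ ω, (Y ω - B ω) ^ 2 ∂μ := by
    rw [← integral_sub_sq_of_condExp_eq_zero (V := fun ω => H ω - B ω)
      (Z := fun ω => Y ω - B ω) (hm.trans hm') (hH.sub hB) (hH2.sub hB2)
      (hY2.sub hB2) hYB]
    congr with ω
    ring
  have hFY : ∫ ω, (F ω - Y ω) ^ 2 ∂μ = ∫ ω, (F ω - B ω) ^ 2 ∂μ + ∫ ω, (Y ω - B ω) ^ 2 ∂μ := by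
    rw [← integral_sub_sq_of_condExp_eq_zero (V := fun ω => F ω - B ω)
      (Z := fun ω => Y ω - B ω) hm' (hF.sub (hB.mono hm)) (hF2.sub hB2)
      (hY2.sub hB2) hYB']
    congr with ω
    ring
  have hFB : ∫ ω, (F ω - B ω) ^ 2 ∂μ = ∫ ω, (B ω - A ω) ^ 2 ∂μ + ∫ ω, (F ω - A ω) ^ 2 ∂μ := by
    rw [← integral_sub_sq_of_condExp_eq_zero (V := fun ω => B ω - A ω)
      (Z := fun ω => F ω - A ω) (hm.trans hm') (hB.sub hA) (hB2.sub hA2)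
      (hF2.sub hA2) hFA]
    congr with ω
    ring
  have hinv : 1 / w = 1 + (1 - w) / w := by field_simp; ring
  have hinv' : 1 / (1 - w) = 1 + w / (1 - w) := by field_simp; ring
  rw [jointRisk, hFH, hHY, hFY, hFB]
  linear_combination inv_mul_integral_sq_sub_add_inv_mul_integral_sq_sub hw0 hw1 hA2 hB2 hH2
    + (∫ ω, (F ω - A ω) ^ 2 ∂μ) * hinv + (∫ ω, (Y ω - B ω) ^ 2 ∂μ) * hinv'

end

theorem Jw_inner_min_eq_mse_add_shrinkage_general
    {Ω : Type*} [MeasurableSpace Ω] (μ : Measure Ω) [IsProbabilityMeasure μ]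
    {dX dU : ℕ}
    (X : Ω → (Fin dX → ℝ)) (U : Ω → (Fin dU → ℝ)) (Y : Ω → ℝ)
    (hX : Measurable X) (hU : Measurable U)
    (hY2 : MemLp Y 2 μ)
    (hCMI : μ[Y | MeasurableSpace.comap U inferInstance]
      =ᵐ[μ] μ[Y | MeasurableSpace.comap (fun ω => (U ω, X ω)) inferInstance])
    (f : (Fin dX → ℝ) → ℝ) (hf : Measurable f)
    (hfX : MemLp (fun ω => f (X ω)) 2 μ)
    (w : ℝ) (hw : w ∈ Set.Ioo (0 : ℝ) 1) :
    IsLeast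
      {r : ℝ | ∃ h : (Fin dU → ℝ) → ℝ, Measurable h ∧ MemLp (fun ω => h (U ω)) 2 μ ∧
        r = (1 / w) * ∫ ω, (f (X ω) - h (U ω)) ^ 2 ∂μ
          + (1 / (1 - w)) * ∫ ω, (h (U ω) - Y ω) ^ 2 ∂μ}
      ((∫ ω, (f (X ω) - Y ω) ^ 2 ∂μ)
        + ((1 - w) / w) * ∫ ω,
            (f (X ω) - (μ[fun ω' => f (X ω') | MeasurableSpace.comap U inferInstance]) ω) ^ 2 ∂μ
        + (w / (1 - w)) * ∫ ω,
            (Y ω - (μ[Y | MeasurableSpace.comap U inferInstance]) ω) ^ 2 ∂μ) := by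
  obtain ⟨hw0, hw1⟩ := hw
  set mU := MeasurableSpace.comap U inferInstance
  set mUX := MeasurableSpace.comap (fun ω => (U ω, X ω)) inferInstance
  have hU' : Measurable[mU] U := Measurable.of_comap_le le_rfl
  have hUX : Measurable[mUX] (fun ω => (U ω, X ω)) := Measurable.of_comap_le le_rfl
  have hF : StronglyMeasurable[mUX] (fun ω => f (X ω)) :=
    (hf.comp (measurable_snd.comp hUX)).stronglyMeasurable
  have hm : mU ≤ mUX := (measurable_fst.comp hUX).comap_le
  have hdecomp {H : Ω → ℝ} (hH : StronglyMeasurable[mU] H) (hH2 : MemLp H 2 μ) :=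
    jointRisk_eq_mse_add_shrinkage hm (hU.prodMk hX).comap_le
      hF hfX hY2 hCMI hH hH2 hw0.ne' hw1.ne
  have hGm : StronglyMeasurable[mU]
      (fun ω => (1 - w) * μ[fun ω => f (X ω) | mU] ω + w * μ[Y | mU] ω) :=
    (stronglyMeasurable_condExp.const_mul _).add (stronglyMeasurable_condExp.const_mul _)
  obtain ⟨g, hg, hG⟩ := hGm.exists_eq_measurable_comp
  have hGU (ω : Ω) : g (U ω) = (1 - w) * μ[fun ω => f (X ω) | mU] ω + w * μ[Y | mU] ω :=
    (congrFun hG ω).symm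
  have hG2 : MemLp (fun ω => g (U ω)) 2 μ := by
    simp only [hGU]
    exact ((hfX.condExp one_le_two).const_mul _).add ((hY2.condExp one_le_two).const_mul _)
  refine ⟨⟨g, hg.measurable, hG2, ?_⟩, ?_⟩
  · rw [← jointRisk, hdecomp (H := fun ω => g (U ω)) (hg.comp_measurable hU') hG2]
    simp [hGU]
  · rintro r ⟨h, hh, hh2, rfl⟩
    rw [← jointRisk, hdecomp (H := fun ω => h (U ω)) (hh.comp hU').stronglyMeasurable hh2]
    exact le_add_of_nonneg_right (mul_nonneg (by positivity) (integral_nonneg fun ω => sq_nonneg _))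

/-- Joint-RR as a regularized method, Section 5.3.
Under conditional mean independence, the minimum over all square-integrable `h` of
`J_w(f, h)` equals
`MSE(f) + ((1−w)/w)·E[(f(X) − E[f(X)|U])²] + (w/(1−w))·E[(Y − E[Y|U])²]`. -/
theorem Jw_inner_min_eq_mse_add_shrinkage
    {Ω : Type*} [MeasurableSpace Ω] (μ : Measure Ω) [IsProbabilityMeasure μ]
    {dX dU : ℕ}
    (X : Ω → (Fin dX → ℝ)) (U : Ω → (Fin dU → ℝ)) (Y : Ω → ℝ)
    (hX : Measurable X) (hU : Measurable U) (hY : Measurable Y)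
    (hY2 : MemLp Y 2 μ)
    (hCMI : μ[Y | MeasurableSpace.comap U inferInstance]
      =ᵐ[μ] μ[Y | MeasurableSpace.comap (fun ω => (U ω, X ω)) inferInstance])
    (f : (Fin dX → ℝ) → ℝ) (hf : Measurable f)
    (hfX : MemLp (fun ω => f (X ω)) 2 μ)
    (w : ℝ) (hw : w ∈ Set.Ioo (0 : ℝ) 1) :
    IsLeast
      {r : ℝ | ∃ h : (Fin dU → ℝ) → ℝ, Measurable h ∧ MemLp (fun ω => h (U ω)) 2 μ ∧
        r = (1 / w) * ∫ ω, (f (X ω) - h (U ω)) ^ 2 ∂μ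
          + (1 / (1 - w)) * ∫ ω, (h (U ω) - Y ω) ^ 2 ∂μ}
      ((∫ ω, (f (X ω) - Y ω) ^ 2 ∂μ)
        + ((1 - w) / w) * ∫ ω,
            (f (X ω) - (μ[fun ω' => f (X ω') | MeasurableSpace.comap U inferInstance]) ω) ^ 2 ∂μ
        + (w / (1 - w)) * ∫ ω,
            (Y ω - (μ[Y | MeasurableSpace.comap U inferInstance]) ω) ^ 2 ∂μ) :=
  Jw_inner_min_eq_mse_add_shrinkage_general μ X U Y hX hU hY2 hCMI f hf hfX w hw
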